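/- Let A ∈ Sym3 be positive definite, B = A⁻¹, a = det A, and let h ∈ ℝ³ be nonzero; set t = (hᵀAh)/a, u = Ah and α = hᵀAh. Define the linear map 𝒮 : Sym3 → Sym3 by 𝒮(X) = (2/a)[(uᵀXu) B + tr(XA) h hᵀ + α X − α tr(XA) B − 2 h (Xu)ᵀ − 2 (Xu) hᵀ]. Then 𝒮 is diagonalizable with real eigenvalues, and its eigenvalues, with multiplicity, are: −4t with multiplicity 1, 2t with multiplicity 2, and −2t with multiplicity 3. In particular the largest eigenvalue of 𝒮 is 2t = 2(hᵀAh)/det A, and the trace of 𝒮 as an endomorphism of Sym3 equals −6t. Explicit eigenvectors are h hᵀ (eigenvalue −4t); e fᵀ + f eᵀ and e eᵀ − f fᵀ (eigenvalue 2t); h eᵀ + e hᵀ, h fᵀ + f hᵀ and αB − h hᵀ (eigenvalue −2t), where e, f ∈ ℝ³ are nonzero vectors with eᵀAf = eᵀAh = fᵀAh = 0 and eᵀAe = fᵀAf. -/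

import Mathlib

open MeasureTheory Matrix Real Filter Topology Set Asymptotics

noncomputable section

/-- 3×3 real matrices; symmetric ones form `Sym3`, encoded via `Matrix.IsSymm`/`Matrix.PosDef`. -/
abbrev Mat3 := Matrix (Fin 3) (Fin 3) ℝ

/-- vectors in ℝ³ -/
abbrev Vec3 := Fin 3 → ℝ

/-- Euclidean norm on ℝ³. -/
def enorm3 (p : Vec3) : ℝ := Real.sqrt (∑ i, p i ^ 2)

/-- the quadratic form pᵀBp. -/
def quadForm (B : Mat3) (p : Vec3) : ℝ := p ⬝ᵥ B.mulVec p

/-- Ψ(B)_{ij} = 4π (det B)^{1/2} ∫ (pᵀBp)^{−1/2} p_i p_j f(p) dp. -/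
def PsiM (f : Vec3 → ℝ) (B : Mat3) : Mat3 :=
  Matrix.of fun i j =>
    (4 * π) * Real.sqrt B.det * ∫ p : Vec3, (Real.sqrt (quadForm B p))⁻¹ * (p i * p j * f p)

/-- χ_b(k)_{ij} = 4π (det b)^{1/2} ∫ (pᵀbp)^{−3/2} ((bp)ᵀ k (bp)) p_i p_j f(p) dp. -/
def chiM (f : Vec3 → ℝ) (b : Mat3) (k : Mat3) : Mat3 :=
  Matrix.of fun i j =>
    (4 * π) * Real.sqrt b.det *
      ∫ p : Vec3, ((Real.sqrt (quadForm b p))⁻¹ ^ 3) * (quadForm k (b.mulVec p) * (p i * p j * f p))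

/-- With u = ah, w = kh, α = hᵀah and b = a⁻¹:
M_a(k) = (2/det a)((hᵀkh) a + α k − 2(u wᵀ + w uᵀ) + tr(bk)(2 u uᵀ − α a)). -/
def MM (a : Mat3) (h : Vec3) (k : Mat3) : Mat3 :=
  (2 / a.det) • ((h ⬝ᵥ k.mulVec h) • a + (h ⬝ᵥ a.mulVec h) • k
    - (2:ℝ) • (vecMulVec (a.mulVec h) (k.mulVec h) + vecMulVec (k.mulVec h) (a.mulVec h))
    + (a⁻¹ * k).trace • ((2:ℝ) • vecMulVec (a.mulVec h) (a.mulVec h) - (h ⬝ᵥ a.mulVec h) • a))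

/-- The Fuchsian condition at B (with A = B⁻¹):
2Ψ(B) = A − (2/det A)((hᵀAh) A − 2 (Ah)(Ah)ᵀ). -/
def FuchsCond (f : Vec3 → ℝ) (h : Vec3) (B : Mat3) : Prop :=
  (2:ℝ) • PsiM f B =
    B⁻¹ - (2 / (B⁻¹).det) •
      ((h ⬝ᵥ (B⁻¹).mulVec h) • B⁻¹ - (2:ℝ) • vecMulVec ((B⁻¹).mulVec h) ((B⁻¹).mulVec h))

/-- F(B) = 16π ∫ (pᵀBp)^{1/2} f dp + 2 (det B)^{−1/2} + 4 (det B)^{1/2} hᵀB⁻¹h. -/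
def Ffun (f : Vec3 → ℝ) (h : Vec3) (B : Mat3) : ℝ :=
  16 * π * (∫ p : Vec3, Real.sqrt (quadForm B p) * f p)
    + 2 * (Real.sqrt B.det)⁻¹ + 4 * Real.sqrt B.det * (h ⬝ᵥ (B⁻¹).mulVec h)

/-- The magnetic operator 𝒮 on symmetric matrices: with a = det A, B = A⁻¹, u = Ah,
α = hᵀAh, 𝒮(X) = (2/a)[(uᵀXu) B + tr(XA) h hᵀ + α X − α tr(XA) B − 2 h (Xu)ᵀ − 2 (Xu) hᵀ]. -/
def SS (A : Mat3) (h : Vec3) (X : Mat3) : Mat3 :=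
  (2 / A.det) • ((A.mulVec h ⬝ᵥ X.mulVec (A.mulVec h)) • A⁻¹
    + (X * A).trace • vecMulVec h h
    + (h ⬝ᵥ A.mulVec h) • X
    - ((h ⬝ᵥ A.mulVec h) * (X * A).trace) • A⁻¹
    - (2:ℝ) • vecMulVec h (X.mulVec (A.mulVec h))
    - (2:ℝ) • vecMulVec (X.mulVec (A.mulVec h)) h)

/-!
Write `α = hᵀAh` and `t = α / det A`. Pick `e, f` spanning the `A`-orthogonal complement of `h`
with `eᵀAe = fᵀAf` (a nonzero kernel vector of a 3×3 matrix with a zero row, rescaled). A direct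
computation shows that `h hᵀ`, `e fᵀ + f eᵀ`, `e eᵀ − f fᵀ`, `h eᵀ + e hᵀ`, `h fᵀ + f hᵀ` and
`α A⁻¹ − h hᵀ` are eigenvectors of `𝒮` for `−4t, 2t, 2t, −2t, −2t, −2t`. Pairing a vanishing
combination of them against `(Ax)ᵀ · (Ay)` for `x, y ∈ {h, e, f}` gives a triangular system, so they
are linearly independent; as `Sym3` has dimension 6 they form an eigenbasis, and an eigenvector
expanded in an eigenbasis can only have one of the listed eigenvalues.
-/

section VecMulVec

variable {R n : Type*} [CommSemiring R]

lemma vecMulVec_mulVec_eq_smul [Fintype n] (x y z : n → R) :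
    vecMulVec x y *ᵥ z = (y ⬝ᵥ z) • x := by
  rw [vecMulVec_mulVec, op_smul_eq_smul]

lemma trace_vecMulVec_mul [Fintype n] (x y : n → R) (A : Matrix n n R) :
    (vecMulVec x y * A).trace = y ⬝ᵥ A *ᵥ x := by
  rw [trace_mul_comm, mul_vecMulVec, trace_vecMulVec, dotProduct_comm]

lemma Matrix.IsSymm.dotProduct_mulVec_comm [Fintype n] {A : Matrix n n R} (hA : A.IsSymm)
    (x y : n → R) : x ⬝ᵥ A *ᵥ y = y ⬝ᵥ A *ᵥ x := by
  rw [dotProduct_mulVec, ← mulVec_transpose, hA.eq, dotProduct_comm]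

lemma isSymm_vecMulVec_self (x : n → R) : (vecMulVec x x).IsSymm :=
  transpose_vecMulVec x x

lemma isSymm_vecMulVec_add_vecMulVec (x y : n → R) :
    (vecMulVec x y + vecMulVec y x).IsSymm := by
  rw [IsSymm, transpose_add, transpose_vecMulVec, transpose_vecMulVec, add_comm]

end VecMulVec

lemma Matrix.PosDef.isSymm {n : Type*} [Fintype n] {A : Matrix n n ℝ} (hA : A.PosDef) :
    A.IsSymm :=
  isHermitian_iff_isSymm.mp hA.1

section Eigenvectors

variable {A : Mat3} {h e f : Vec3}

lemma SS_vecMulVec_self (hA : A.PosDef) :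
    SS A h (vecMulVec h h) = (-4 * ((h ⬝ᵥ A *ᵥ h) / A.det)) • vecMulVec h h := by
  have hdet := hA.det_pos.ne'
  rw [SS, vecMulVec_mulVec_eq_smul, trace_vecMulVec_mul, vecMulVec_smul, smul_vecMulVec,
    dotProduct_smul, dotProduct_comm (A *ᵥ h) h]
  match_scalars <;> field_simp <;> ring

lemma SS_eq_smul_of_mulVec_eq_zero (hA : A.PosDef) {X : Mat3} (hXu : X *ᵥ (A *ᵥ h) = 0)
    (hXA : (X * A).trace = 0) : SS A h X = (2 * ((h ⬝ᵥ A *ᵥ h) / A.det)) • X := by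
  have hdet := hA.det_pos.ne'
  rw [SS, hXu, hXA]
  simp only [dotProduct_zero, zero_smul, vecMulVec_zero, zero_vecMulVec, mul_zero, smul_zero]
  match_scalars
  field_simp

lemma SS_vecMulVec_add_vecMulVec (hA : A.PosDef) (hef : e ⬝ᵥ A *ᵥ f = 0)
    (heh : e ⬝ᵥ A *ᵥ h = 0) (hfh : f ⬝ᵥ A *ᵥ h = 0) :
    SS A h (vecMulVec e f + vecMulVec f e)
      = (2 * ((h ⬝ᵥ A *ᵥ h) / A.det)) • (vecMulVec e f + vecMulVec f e) := by
  refine SS_eq_smul_of_mulVec_eq_zero hA ?_ ?_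
  · rw [add_mulVec, vecMulVec_mulVec_eq_smul, vecMulVec_mulVec_eq_smul, hfh, heh, zero_smul,
      zero_smul, add_zero]
  · rw [add_mul, trace_add, trace_vecMulVec_mul, trace_vecMulVec_mul,
      hA.isSymm.dotProduct_mulVec_comm f e, hef, add_zero]

lemma SS_vecMulVec_sub_vecMulVec (hA : A.PosDef) (heh : e ⬝ᵥ A *ᵥ h = 0)
    (hfh : f ⬝ᵥ A *ᵥ h = 0) (hee : e ⬝ᵥ A *ᵥ e = f ⬝ᵥ A *ᵥ f) :
    SS A h (vecMulVec e e - vecMulVec f f)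
      = (2 * ((h ⬝ᵥ A *ᵥ h) / A.det)) • (vecMulVec e e - vecMulVec f f) := by
  refine SS_eq_smul_of_mulVec_eq_zero hA ?_ ?_
  · rw [sub_mulVec, vecMulVec_mulVec_eq_smul, vecMulVec_mulVec_eq_smul, hfh, heh, zero_smul,
      zero_smul, sub_zero]
  · rw [sub_mul, trace_sub, trace_vecMulVec_mul, trace_vecMulVec_mul, hee, sub_self]

lemma SS_vecMulVec_field_add_vecMulVec (hA : A.PosDef) (heh : e ⬝ᵥ A *ᵥ h = 0) :
    SS A h (vecMulVec h e + vecMulVec e h)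
      = (-2 * ((h ⬝ᵥ A *ᵥ h) / A.det)) • (vecMulVec h e + vecMulVec e h) := by
  have hdet := hA.det_pos.ne'
  have hXu : (vecMulVec h e + vecMulVec e h) *ᵥ (A *ᵥ h) = (h ⬝ᵥ A *ᵥ h) • e := by
    rw [add_mulVec, vecMulVec_mulVec_eq_smul, vecMulVec_mulVec_eq_smul, heh, zero_smul,
      zero_add]
  have hXA : ((vecMulVec h e + vecMulVec e h) * A).trace = 0 := by
    rw [add_mul, trace_add, trace_vecMulVec_mul, trace_vecMulVec_mul,
      hA.isSymm.dotProduct_mulVec_comm h e, heh, add_zero]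
  rw [SS, hXu, hXA, dotProduct_smul, dotProduct_comm (A *ᵥ h) e, heh, vecMulVec_smul,
    smul_vecMulVec]
  match_scalars <;> field_simp <;> ring

lemma SS_smul_inv_sub_vecMulVec (hA : A.PosDef) :
    SS A h ((h ⬝ᵥ A *ᵥ h) • A⁻¹ - vecMulVec h h)
      = (-2 * ((h ⬝ᵥ A *ᵥ h) / A.det)) • ((h ⬝ᵥ A *ᵥ h) • A⁻¹ - vecMulVec h h) := by
  have hdet := hA.det_pos.ne'
  have hXu : ((h ⬝ᵥ A *ᵥ h) • A⁻¹ - vecMulVec h h) *ᵥ (A *ᵥ h) = 0 := by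
    rw [sub_mulVec, smul_mulVec, mulVec_mulVec, nonsing_inv_mul _ hdet.isUnit, one_mulVec,
      vecMulVec_mulVec_eq_smul, dotProduct_comm, sub_self]
  have hXA : (((h ⬝ᵥ A *ᵥ h) • A⁻¹ - vecMulVec h h) * A).trace = 2 * (h ⬝ᵥ A *ᵥ h) := by
    rw [sub_mul, smul_mul, nonsing_inv_mul _ hdet.isUnit, trace_sub, trace_smul, trace_one,
      trace_vecMulVec_mul]
    simp only [Fintype.card_fin, Nat.cast_ofNat, smul_eq_mul]
    ring
  rw [SS, hXu, hXA]
  simp only [dotProduct_zero, zero_smul, vecMulVec_zero, zero_vecMulVec, smul_zero]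
  match_scalars <;> field_simp <;> ring

end Eigenvectors

theorem LinearIndependent.eigenvalue_mem_range {R M ι : Type*} [CommRing R] [NoZeroDivisors R]
    [AddCommGroup M] [Module R M] [Fintype ι] {T : M →ₗ[R] M} {b : ι → M} {ev : ι → R}
    (hb : LinearIndependent R b) (hT : ∀ i, T (b i) = ev i • b i) {x : M}
    (hx : x ∈ Submodule.span R (Set.range b)) (hx0 : x ≠ 0) {μ : R} (hμ : T x = μ • x) :
    μ ∈ Set.range ev := by
  obtain ⟨c, rfl⟩ := (Submodule.mem_span_range_iff_exists_fun R).mp hx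
  have hsum : ∑ i, (c i * (ev i - μ)) • b i = 0 := by
    simp only [mul_sub, sub_smul, Finset.sum_sub_distrib, mul_smul, ← hT, ← map_smul, ← map_sum,
      hμ, Finset.smul_sum, smul_comm μ, sub_self]
  obtain ⟨i, hi⟩ : ∃ i, c i ≠ 0 := by
    by_contra! hc
    exact hx0 (by simp [hc])
  have hci := Fintype.linearIndependent_iff.mp hb _ hsum i
  exact ⟨i, sub_eq_zero.mp ((mul_eq_zero.mp hci).resolve_left hi)⟩

lemma exists_ne_zero_dotProduct_eq_zero_of_fin_three {K : Type*} [Field K] (x y : Fin 3 → K) :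
    ∃ v ≠ 0, v ⬝ᵥ x = 0 ∧ v ⬝ᵥ y = 0 := by
  obtain ⟨v, hv, hMv⟩ := exists_mulVec_eq_zero_iff.mpr
    (det_eq_zero_of_row_eq_zero (A := Matrix.of ![x, y, 0]) 2 fun _ => rfl)
  exact ⟨v, hv, (dotProduct_comm _ _).trans (congrFun hMv 0),
    (dotProduct_comm _ _).trans (congrFun hMv 1)⟩

lemma Matrix.PosDef.exists_orthogonal_pair {A : Mat3} (hA : A.PosDef) (h : Vec3) :
    ∃ e f : Vec3, e ≠ 0 ∧ e ⬝ᵥ A *ᵥ f = 0 ∧ e ⬝ᵥ A *ᵥ h = 0 ∧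
      f ⬝ᵥ A *ᵥ h = 0 ∧ e ⬝ᵥ A *ᵥ e = f ⬝ᵥ A *ᵥ f := by
  obtain ⟨e, he, heh⟩ := exists_ne_zero_dotProduct_eq_zero (A *ᵥ h)
  obtain ⟨f, hf, hfh, hfe⟩ := exists_ne_zero_dotProduct_eq_zero_of_fin_three (A *ᵥ h) (A *ᵥ e)
  have hβe := hA.dotProduct_mulVec_pos he
  have hβf := hA.dotProduct_mulVec_pos hf
  simp only [star_trivial] at hβe hβf
  set c := √((e ⬝ᵥ A *ᵥ e) / (f ⬝ᵥ A *ᵥ f))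
  refine ⟨e, c • f, he, ?_, heh, ?_, ?_⟩
  · rw [hA.isSymm.dotProduct_mulVec_comm, smul_dotProduct, hfe, smul_zero]
  · rw [smul_dotProduct, hfh, smul_zero]
  · rw [mulVec_smul, dotProduct_smul, smul_dotProduct, smul_eq_mul, smul_eq_mul, ← mul_assoc,
      ← sq, Real.sq_sqrt (div_pos hβe hβf).le, div_mul_cancel₀ _ hβf.ne']

def magneticEigenbasis (A : Mat3) (h e f : Vec3) : Fin 6 → Mat3 :=
  ![vecMulVec h h, vecMulVec e f + vecMulVec f e, vecMulVec e e - vecMulVec f f,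
    vecMulVec h e + vecMulVec e h, vecMulVec h f + vecMulVec f h,
    (h ⬝ᵥ A *ᵥ h) • A⁻¹ - vecMulVec h h]

def magneticEigenvalues (t : ℝ) : Fin 6 → ℝ :=
  ![-4 * t, 2 * t, 2 * t, -2 * t, -2 * t, -2 * t]

lemma magneticEigenvalues_cases {t : ℝ} (ht : 0 ≤ t) (i : Fin 6) :
    (magneticEigenvalues t i = -4 * t ∨ magneticEigenvalues t i = 2 * t ∨
      magneticEigenvalues t i = -2 * t) ∧ magneticEigenvalues t i ≤ 2 * t := by
  fin_cases i
  · exact ⟨Or.inl rfl, by change -4 * t ≤ 2 * t; linarith⟩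
  · exact ⟨Or.inr (Or.inl rfl), le_rfl⟩
  · exact ⟨Or.inr (Or.inl rfl), le_rfl⟩
  · exact ⟨Or.inr (Or.inr rfl), by change -2 * t ≤ 2 * t; linarith⟩
  · exact ⟨Or.inr (Or.inr rfl), by change -2 * t ≤ 2 * t; linarith⟩
  · exact ⟨Or.inr (Or.inr rfl), by change -2 * t ≤ 2 * t; linarith⟩

section Eigenbasis

variable {A : Mat3} {h e f : Vec3}

lemma isSymm_magneticEigenbasis (hA : A.PosDef) (i : Fin 6) :
    (magneticEigenbasis A h e f i).IsSymm := by
  fin_cases i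
  · exact isSymm_vecMulVec_self h
  · exact isSymm_vecMulVec_add_vecMulVec e f
  · exact (isSymm_vecMulVec_self e).sub (isSymm_vecMulVec_self f)
  · exact isSymm_vecMulVec_add_vecMulVec h e
  · exact isSymm_vecMulVec_add_vecMulVec h f
  · exact (hA.isSymm.inv.smul _).sub (isSymm_vecMulVec_self h)

lemma SS_magneticEigenbasis (hA : A.PosDef) (hef : e ⬝ᵥ A *ᵥ f = 0) (heh : e ⬝ᵥ A *ᵥ h = 0)
    (hfh : f ⬝ᵥ A *ᵥ h = 0) (hee : e ⬝ᵥ A *ᵥ e = f ⬝ᵥ A *ᵥ f) (i : Fin 6) :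
    SS A h (magneticEigenbasis A h e f i) =
      magneticEigenvalues ((h ⬝ᵥ A *ᵥ h) / A.det) i • magneticEigenbasis A h e f i := by
  fin_cases i
  exacts [SS_vecMulVec_self hA, SS_vecMulVec_add_vecMulVec hA hef heh hfh,
    SS_vecMulVec_sub_vecMulVec hA heh hfh hee, SS_vecMulVec_field_add_vecMulVec hA heh,
    SS_vecMulVec_field_add_vecMulVec hA hfh, SS_smul_inv_sub_vecMulVec hA]

lemma linearIndependent_magneticEigenbasis (hA : A.PosDef) (hh : h ≠ 0) (he : e ≠ 0)
    (hef : e ⬝ᵥ A *ᵥ f = 0) (heh : e ⬝ᵥ A *ᵥ h = 0) (hfh : f ⬝ᵥ A *ᵥ h = 0)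
    (hee : e ⬝ᵥ A *ᵥ e = f ⬝ᵥ A *ᵥ f) :
    LinearIndependent ℝ (magneticEigenbasis A h e f) := by
  have hα : 0 < h ⬝ᵥ A *ᵥ h := by simpa using hA.dotProduct_mulVec_pos hh
  have hβ : 0 < e ⬝ᵥ A *ᵥ e := by simpa using hA.dotProduct_mulVec_pos he
  have hsymm := hA.isSymm.dotProduct_mulVec_comm
  have hinv (y : Vec3) : A⁻¹ *ᵥ (A *ᵥ y) = y := by
    rw [mulVec_mulVec, nonsing_inv_mul _ hA.det_pos.ne'.isUnit, one_mulVec]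
  have hcomm (x y : Vec3) : A *ᵥ x ⬝ᵥ y = y ⬝ᵥ A *ᵥ x := dotProduct_comm _ _
  rw [Fintype.linearIndependent_iff]
  intro g hg
  have key (v w : Vec3) : ∑ i, g i * (v ⬝ᵥ magneticEigenbasis A h e f i *ᵥ w) = 0 := by
    simpa only [sum_mulVec, dotProduct_sum, smul_mulVec, dotProduct_smul, smul_eq_mul,
      zero_mulVec, dotProduct_zero] using congrArg (fun Y => v ⬝ᵥ Y *ᵥ w) hg
  have Ehh := key (A *ᵥ h) (A *ᵥ h)
  have Ehe := key (A *ᵥ h) (A *ᵥ e)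
  have Ehf := key (A *ᵥ h) (A *ᵥ f)
  have Eef := key (A *ᵥ e) (A *ᵥ f)
  have Eee := key (A *ᵥ e) (A *ᵥ e)
  have Eff := key (A *ᵥ f) (A *ᵥ f)
  simp only [Fin.sum_univ_six, magneticEigenbasis, Matrix.cons_val, add_mulVec, sub_mulVec,
    smul_mulVec, vecMulVec_mulVec_eq_smul, hinv, add_dotProduct, sub_dotProduct, smul_dotProduct,
    smul_eq_mul, hcomm, hsymm h e, hsymm h f, hsymm f e, heh, hfh, hef, hee, mul_zero, zero_mul, add_zero, zero_add,
    sub_zero, zero_sub, sub_self, zero_dotProduct] at Ehh Ehe Ehf Eef Eee Eff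
  rw [hee] at hβ
  have hαβ := (mul_pos hβ hα).ne'
  have hββ := (mul_pos hβ hβ).ne'
  have Eg2 : g 2 * (2 * (f ⬝ᵥ A *ᵥ f * f ⬝ᵥ A *ᵥ f)) = 0 := by linear_combination Eee - Eff
  have Eg5 : g 5 * (2 * (h ⬝ᵥ A *ᵥ h * f ⬝ᵥ A *ᵥ f)) = 0 := by linear_combination Eee + Eff
  intro i
  fin_cases i
  · exact (mul_eq_zero.mp Ehh).resolve_right (mul_pos hα hα).ne'
  · exact (mul_eq_zero.mp Eef).resolve_right hββ
  · exact (mul_eq_zero.mp Eg2).resolve_right (by positivity)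
  · exact (mul_eq_zero.mp Ehe).resolve_right hαβ
  · exact (mul_eq_zero.mp Ehf).resolve_right hαβ
  · exact (mul_eq_zero.mp Eg5).resolve_right (by positivity)

end Eigenbasis

def symmetricSingles : Fin 6 → Mat3 :=
  ![single 0 0 1, single 1 1 1, single 2 2 1,
    single 0 1 1 + single 1 0 1, single 0 2 1 + single 2 0 1, single 1 2 1 + single 2 1 1]

lemma isSymm_mem_span_symmetricSingles {Y : Mat3} (hY : Y.IsSymm) :
    Y ∈ Submodule.span ℝ (Set.range symmetricSingles) := by
  rw [Submodule.mem_span_range_iff_exists_fun]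
  refine ⟨![Y 0 0, Y 1 1, Y 2 2, Y 0 1, Y 0 2, Y 1 2], ?_⟩
  have h01 : Y 1 0 = Y 0 1 := hY.apply 0 1
  have h02 : Y 2 0 = Y 0 2 := hY.apply 0 2
  have h12 : Y 2 1 = Y 1 2 := hY.apply 1 2
  ext i j
  fin_cases i <;> fin_cases j <;> simp [symmetricSingles, Fin.sum_univ_six, single, h01, h02, h12]

lemma isSymm_mem_span_of_linearIndependent {X : Fin 6 → Mat3} (hX : LinearIndependent ℝ X)
    (hXsymm : ∀ i, (X i).IsSymm) {Y : Mat3} (hY : Y.IsSymm) :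
    Y ∈ Submodule.span ℝ (Set.range X) := by
  have hle : Submodule.span ℝ (Set.range X) ≤ Submodule.span ℝ (Set.range symmetricSingles) :=
    Submodule.span_le.mpr <|
      Set.range_subset_iff.mpr fun i => isSymm_mem_span_symmetricSingles (hXsymm i)
  have hrank : Module.finrank ℝ (Submodule.span ℝ (Set.range symmetricSingles)) ≤
      Module.finrank ℝ (Submodule.span ℝ (Set.range X)) := by
    rw [finrank_span_eq_card hX]
    exact finrank_range_le_card symmetricSingles
  rw [Submodule.eq_of_le_of_finrank_le hle hrank]
  exact isSymm_mem_span_symmetricSingles hY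

def magneticOp (A : Mat3) (h : Vec3) : Mat3 →ₗ[ℝ] Mat3 where
  toFun := SS A h
  map_add' X Y := by
    simp only [SS, add_mulVec, dotProduct_add, add_mul, trace_add, vecMulVec_add, add_vecMulVec]
    module
  map_smul' c X := by
    simp only [SS, smul_mulVec, dotProduct_smul, smul_mul, trace_smul, vecMulVec_smul,
      smul_vecMulVec, smul_eq_mul, RingHom.id_apply]
    module

/-- 𝒮 is diagonalizable on Sym3 with real eigenvalues −4t (multiplicity 1),
2t (multiplicity 2), −2t (multiplicity 3), where t = (hᵀAh)/det A; the largest eigenvalue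
is 2t, the trace is −6t, and explicit eigenvectors are as listed. -/
theorem magnetic_tensor_eigenvalues (A : Mat3) (h : Vec3) (hA : A.PosDef) (hh : h ≠ 0) :
    -- diagonalizability with multiplicities: an eigenbasis of Sym3 with eigenvalue list
    -- (−4t, 2t, 2t, −2t, −2t, −2t), whose sum (the trace of 𝒮 on Sym3) is −6t
    (∃ X : Fin 6 → Mat3, (∀ n, (X n).IsSymm) ∧ LinearIndependent ℝ X ∧
      (∀ Y : Mat3, Y.IsSymm → Y ∈ Submodule.span ℝ (Set.range X)) ∧
      (∀ n, SS A h (X n) =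
        (![-4 * ((h ⬝ᵥ A.mulVec h) / A.det), 2 * ((h ⬝ᵥ A.mulVec h) / A.det),
           2 * ((h ⬝ᵥ A.mulVec h) / A.det), -2 * ((h ⬝ᵥ A.mulVec h) / A.det),
           -2 * ((h ⬝ᵥ A.mulVec h) / A.det), -2 * ((h ⬝ᵥ A.mulVec h) / A.det)] n) • X n) ∧
      (∑ n : Fin 6,
        ![-4 * ((h ⬝ᵥ A.mulVec h) / A.det), 2 * ((h ⬝ᵥ A.mulVec h) / A.det),
          2 * ((h ⬝ᵥ A.mulVec h) / A.det), -2 * ((h ⬝ᵥ A.mulVec h) / A.det),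
          -2 * ((h ⬝ᵥ A.mulVec h) / A.det), -2 * ((h ⬝ᵥ A.mulVec h) / A.det)] n
        = -6 * ((h ⬝ᵥ A.mulVec h) / A.det))) ∧
    -- every eigenvalue is −4t, 2t or −2t; in particular all are ≤ 2t
    (∀ (μ : ℝ) (X : Mat3), X.IsSymm → X ≠ 0 → SS A h X = μ • X →
      (μ = -4 * ((h ⬝ᵥ A.mulVec h) / A.det) ∨ μ = 2 * ((h ⬝ᵥ A.mulVec h) / A.det) ∨
        μ = -2 * ((h ⬝ᵥ A.mulVec h) / A.det)) ∧ μ ≤ 2 * ((h ⬝ᵥ A.mulVec h) / A.det)) ∧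
    -- explicit eigenvectors, for any admissible pair e, f
    (∀ e f : Vec3, e ≠ 0 → f ≠ 0 →
      e ⬝ᵥ A.mulVec f = 0 → e ⬝ᵥ A.mulVec h = 0 → f ⬝ᵥ A.mulVec h = 0 →
      e ⬝ᵥ A.mulVec e = f ⬝ᵥ A.mulVec f →
      SS A h (vecMulVec h h) = (-4 * ((h ⬝ᵥ A.mulVec h) / A.det)) • vecMulVec h h ∧
      SS A h (vecMulVec e f + vecMulVec f e)
        = (2 * ((h ⬝ᵥ A.mulVec h) / A.det)) • (vecMulVec e f + vecMulVec f e) ∧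
      SS A h (vecMulVec e e - vecMulVec f f)
        = (2 * ((h ⬝ᵥ A.mulVec h) / A.det)) • (vecMulVec e e - vecMulVec f f) ∧
      SS A h (vecMulVec h e + vecMulVec e h)
        = (-2 * ((h ⬝ᵥ A.mulVec h) / A.det)) • (vecMulVec h e + vecMulVec e h) ∧
      SS A h (vecMulVec h f + vecMulVec f h)
        = (-2 * ((h ⬝ᵥ A.mulVec h) / A.det)) • (vecMulVec h f + vecMulVec f h) ∧
      SS A h ((h ⬝ᵥ A.mulVec h) • A⁻¹ - vecMulVec h h)
        = (-2 * ((h ⬝ᵥ A.mulVec h) / A.det)) • ((h ⬝ᵥ A.mulVec h) • A⁻¹ - vecMulVec h h)) := by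
  obtain ⟨e, f, he, hef, heh, hfh, hee⟩ := hA.exists_orthogonal_pair h
  have hind := linearIndependent_magneticEigenbasis hA hh he hef heh hfh hee
  have hsymm : ∀ i, (magneticEigenbasis A h e f i).IsSymm := isSymm_magneticEigenbasis hA
  have heig := SS_magneticEigenbasis hA hef heh hfh hee
  have ht : 0 < (h ⬝ᵥ A *ᵥ h) / A.det :=
    div_pos (by simpa using hA.dotProduct_mulVec_pos hh) hA.det_pos
  refine ⟨⟨magneticEigenbasis A h e f, hsymm, hind,
      fun Y hY => isSymm_mem_span_of_linearIndependent hind hsymm hY, heig, ?_⟩,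
    fun μ X hX hX0 hμ => ?_,
    fun e f _ _ hef heh hfh hee => ⟨SS_vecMulVec_self hA, SS_vecMulVec_add_vecMulVec hA hef heh hfh,
      SS_vecMulVec_sub_vecMulVec hA heh hfh hee, SS_vecMulVec_field_add_vecMulVec hA heh,
      SS_vecMulVec_field_add_vecMulVec hA hfh, SS_smul_inv_sub_vecMulVec hA⟩⟩
  · simp only [Fin.sum_univ_six, Matrix.cons_val]
    ring
  · obtain ⟨i, rfl⟩ := hind.eigenvalue_mem_range (T := magneticOp A h) heig
      (isSymm_mem_span_of_linearIndependent hind hsymm hX) hX0 hμ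
    exact magneticEigenvalues_cases ht.le i
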